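/- arXiv:2103.11499 — 2 statements merged into one kernel-verified Lean document; each statement's English description precedes it below -/
import Mathlib

section
/- Let X and Y be real symmetric L×L matrices. If X is positive definite and X − Y X⁻¹ Y is positive definite, then X + Y and X − Y are positive semidefinite. -/
/-!
Write `S = X - Y X⁻¹ Y`. For `Z = X + Y` one has the identity `Zᴴ X⁻¹ Z + S = 2 Z`, and both
summands on the left are positive semidefinite, so `Z` is. Replacing `Y` by `-Y` leaves `S`
unchanged and gives the claim for `X - Y`.
-/

open Matrix
open scoped ComplexOrder

namespace Matrix

variable {n 𝕜 : Type*} [RCLike 𝕜]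

lemma PosSemidef.of_add_self {A : Matrix n n 𝕜} (h : (A + A).PosSemidef) : A.PosSemidef := by
  have hA : A = (2⁻¹ : ℝ) • (A + A) := by
    rw [← two_smul ℝ A, smul_smul, inv_mul_cancel₀ two_ne_zero, one_smul]
  rw [hA]
  exact h.smul (by norm_num)

variable [Fintype n] [DecidableEq n]

lemma conjTranspose_add_mul_inv_mul_add_add_sub {α : Type*} [CommRing α] [StarRing α]
    {X Y : Matrix n n α} (hX : X.IsHermitian) (hY : Y.IsHermitian) (hdet : IsUnit X.det) :
    (X + Y)ᴴ * X⁻¹ * (X + Y) + (X - Y * X⁻¹ * Y) = (X + Y) + (X + Y) := by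
  rw [(hX.add hY).eq, add_mul X Y X⁻¹, mul_nonsing_inv X hdet, add_mul, one_mul, mul_add,
    nonsing_inv_mul_cancel_right X Y hdet]
  abel

theorem PosDef.posSemidef_add_of_posSemidef_sub_mul_inv_mul {X Y : Matrix n n 𝕜}
    (hX : X.PosDef) (hY : Y.IsHermitian) (h : (X - Y * X⁻¹ * Y).PosSemidef) :
    (X + Y).PosSemidef := by
  have hdet : IsUnit X.det := (isUnit_iff_isUnit_det X).mp hX.isUnit
  refine PosSemidef.of_add_self ?_
  rw [← conjTranspose_add_mul_inv_mul_add_add_sub hX.isHermitian hY hdet]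
  exact (hX.inv.posSemidef.conjTranspose_mul_mul_same _).add h

end Matrix

theorem stmt_1_general (L : ℕ) (X Y : Matrix (Fin L) (Fin L) ℝ)
    (hY : Y.IsSymm) (hXpd : X.PosDef)
    (h : (X - Y * X⁻¹ * Y).PosDef) :
    (X + Y).PosSemidef ∧ (X - Y).PosSemidef := by
  have hYh : Y.IsHermitian := isHermitian_iff_isSymm.mpr hY
  refine ⟨hXpd.posSemidef_add_of_posSemidef_sub_mul_inv_mul hYh h.posSemidef, ?_⟩
  have hneg := hXpd.posSemidef_add_of_posSemidef_sub_mul_inv_mul hYh.neg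
    (by simpa only [neg_mul, mul_neg, neg_neg] using h.posSemidef)
  rwa [← sub_eq_add_neg] at hneg

/-- If X is symmetric positive definite and X − Y X⁻¹ Y is positive definite (Y symmetric),
then X + Y and X − Y are positive semidefinite. -/
theorem stmt_1 (L : ℕ) (X Y : Matrix (Fin L) (Fin L) ℝ)
    (hX : X.IsSymm) (hY : Y.IsSymm) (hXpd : X.PosDef)
    (h : (X - Y * X⁻¹ * Y).PosDef) :
    (X + Y).PosSemidef ∧ (X - Y).PosSemidef :=
  stmt_1_general L X Y hY hXpd h
end

section
/- Fix integers L ≥ 1 and m ≥ 2. The set of tuples (X, Y₂, …, Yₘ) of real symmetric L×L matrices such that X + Yᵢ and X − Yᵢ are positive semidefinite for every i ∈ {2, …, m} equals the closure (in the Euclidean topology on tuples of matrices) of the set of tuples of real symmetric L×L matrices such that X is positive definite and X − Yᵢ X⁻¹ Yᵢ is positive definite for every i ∈ {2, …, m}. -/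
/-!
For `X ≻ 0` and Hermitian `Y`, put `A = 1 - X⁻¹Y` and `B = 1 + X⁻¹Y`. Then
`Aᴴ (X + Y) A + Bᴴ (X - Y) B = 2 (X - Y X⁻¹ Y)` and `Bᴴ X B + (X - Y X⁻¹ Y) = 2 (X + Y)`.
The second identity shows that a positive semidefinite Schur complement forces `X ± Y ⪰ 0`, so the
Schur set lies in the closed set cut out by `X ± Yᵢ ⪰ 0`. The first shows that `X ± Y ≻ 0` forces
`X - Y X⁻¹ Y ≻ 0` (since `A + B = 2`, `A` and `B` have no common kernel); applied to `X + t • 1`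
for `t > 0`, it approximates every point of that closed set by points of the Schur set.
-/

open Matrix Filter Topology
open scoped ComplexOrder

namespace Matrix

section

variable {𝕜 n : Type*} [RCLike 𝕜] {X Y : Matrix n n 𝕜}

lemma PosSemidef.of_add_of_sub (hadd : (X + Y).PosSemidef) (hsub : (X - Y).PosSemidef) :
    X.PosSemidef := by
  have := (hadd.add hsub).smul (by norm_num : (0 : ℝ) ≤ 2⁻¹)
  rwa [add_add_sub_cancel, ← two_smul ℝ, smul_smul, inv_mul_cancel₀ two_ne_zero, one_smul] at this

lemma PosDef.of_add_of_sub (hadd : (X + Y).PosDef) (hsub : (X - Y).PosDef) : X.PosDef := by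
  have := (hadd.add hsub).smul (by norm_num : (0 : ℝ) < 2⁻¹)
  rwa [add_add_sub_cancel, ← two_smul ℝ, smul_smul, inv_mul_cancel₀ two_ne_zero, one_smul] at this

lemma isClosed_setOf_isHermitian : IsClosed {M : Matrix n n 𝕜 | M.IsHermitian} :=
  isClosed_eq continuous_id.matrix_conjTranspose continuous_id

lemma PosSemidef.add_smul_one_posDef [DecidableEq n] (hX : X.PosSemidef) {t : ℝ} (ht : 0 < t) :
    (X + t • 1).PosDef :=
  PosDef.posSemidef_add hX (PosDef.one.smul ht)

end

variable {𝕜 m n : Type*} [RCLike 𝕜] [Fintype m] [Fintype n]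

lemma PosDef.conjTranspose_mul_mul_add_conjTranspose_mul_mul {P Q : Matrix m m 𝕜}
    (hP : P.PosDef) (hQ : Q.PosDef) {A B : Matrix m n 𝕜}
    (hAB : ∀ x, A *ᵥ x = 0 → B *ᵥ x = 0 → x = 0) :
    (Aᴴ * P * A + Bᴴ * Q * B).PosDef := by
  refine PosDef.of_dotProduct_mulVec_pos
    ((isHermitian_conjTranspose_mul_mul A hP.1).add (isHermitian_conjTranspose_mul_mul B hQ.1))
    fun x hx => ?_
  have quad (M : Matrix m m 𝕜) (C : Matrix m n 𝕜) :
      star x ⬝ᵥ ((Cᴴ * M * C) *ᵥ x) = star (C *ᵥ x) ⬝ᵥ (M *ᵥ (C *ᵥ x)) := by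
    simp only [star_mulVec, dotProduct_mulVec, vecMul_vecMul]
  rw [add_mulVec, dotProduct_add, quad, quad]
  by_cases hA : A *ᵥ x = 0
  · exact add_pos_of_nonneg_of_pos (hP.posSemidef.dotProduct_mulVec_nonneg _)
      (hQ.dotProduct_mulVec_pos fun hB => hx (hAB x hA hB))
  · exact add_pos_of_pos_of_nonneg (hP.dotProduct_mulVec_pos hA)
      (hQ.posSemidef.dotProduct_mulVec_nonneg _)

lemma isClosed_setOf_posSemidef : IsClosed {M : Matrix n n 𝕜 | M.PosSemidef} := by
  simp only [posSemidef_iff_dotProduct_mulVec, Set.ofPred_and, Set.ofPred_forall]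
  exact isClosed_setOf_isHermitian.inter <| isClosed_iInter fun _ => isClosed_le continuous_const <|
    continuous_const.dotProduct (continuous_id.matrix_mulVec continuous_const)

variable {ι : Type*} (i₀ : ι)

def plusMinusPosSemidefTuples : Set (ι → Matrix n n 𝕜) :=
  {Z | (∀ i, (Z i).IsHermitian) ∧
    ∀ i, i ≠ i₀ → (Z i₀ + Z i).PosSemidef ∧ (Z i₀ - Z i).PosSemidef}

lemma isClosed_plusMinusPosSemidefTuples :
    IsClosed (plusMinusPosSemidefTuples (𝕜 := 𝕜) (n := n) i₀) := by
  simp only [plusMinusPosSemidefTuples, Set.ofPred_and, Set.ofPred_forall]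
  have hZ (i : ι) : Continuous fun Z : ι → Matrix n n 𝕜 => Z i := continuous_apply i
  refine (isClosed_iInter fun i => isClosed_setOf_isHermitian.preimage (hZ i)).inter
    (isClosed_iInter fun i => isClosed_iInter fun _ => ?_)
  exact (isClosed_setOf_posSemidef.preimage ((hZ i₀).add (hZ i))).inter
    (isClosed_setOf_posSemidef.preimage ((hZ i₀).sub (hZ i)))

variable [DecidableEq n] {X Y : Matrix n n 𝕜}

lemma conj_add_schur_eq_two_smul_add (hX : X.IsHermitian) (hXu : IsUnit X)
    (hY : Y.IsHermitian) :
    (1 + X⁻¹ * Y)ᴴ * X * (1 + X⁻¹ * Y) + (X - Y * X⁻¹ * Y) = (2 : ℝ) • (X + Y) := by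
  have h₁ : X * X⁻¹ = 1 := mul_nonsing_inv X ((isUnit_iff_isUnit_det X).mp hXu)
  have h₂ : X⁻¹ * X = 1 := nonsing_inv_mul X ((isUnit_iff_isUnit_det X).mp hXu)
  rw [conjTranspose_add, conjTranspose_mul, conjTranspose_nonsing_inv, hX.eq, hY.eq,
    conjTranspose_one]
  simp only [add_mul, mul_add, one_mul, mul_one, mul_assoc, h₂]
  simp only [← mul_assoc, h₁, one_mul, two_smul ℝ]
  abel

lemma conj_add_conj_eq_two_smul_schur (hX : X.IsHermitian) (hXu : IsUnit X)
    (hY : Y.IsHermitian) :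
    (1 - X⁻¹ * Y)ᴴ * (X + Y) * (1 - X⁻¹ * Y) + (1 + X⁻¹ * Y)ᴴ * (X - Y) * (1 + X⁻¹ * Y) =
      (2 : ℝ) • (X - Y * X⁻¹ * Y) := by
  have h₁ : X * X⁻¹ = 1 := mul_nonsing_inv X ((isUnit_iff_isUnit_det X).mp hXu)
  have h₂ : X⁻¹ * X = 1 := nonsing_inv_mul X ((isUnit_iff_isUnit_det X).mp hXu)
  rw [conjTranspose_sub, conjTranspose_add, conjTranspose_mul, conjTranspose_nonsing_inv, hX.eq,
    hY.eq, conjTranspose_one]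
  simp only [add_mul, mul_add, sub_mul, mul_sub, one_mul, mul_one, mul_assoc, h₂]
  simp only [← mul_assoc, h₁, one_mul, two_smul ℝ]
  abel

lemma PosDef.add_posSemidef_of_schur (hX : X.PosDef) (hY : Y.IsHermitian)
    (hS : (X - Y * X⁻¹ * Y).PosSemidef) : (X + Y).PosSemidef := by
  have := ((hX.posSemidef.conjTranspose_mul_mul_same (1 + X⁻¹ * Y)).add hS).smul
    (by norm_num : (0 : ℝ) ≤ 2⁻¹)
  rwa [conj_add_schur_eq_two_smul_add hX.1 hX.isUnit hY, smul_smul,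
    inv_mul_cancel₀ two_ne_zero, one_smul] at this

lemma PosDef.sub_posSemidef_of_schur (hX : X.PosDef) (hY : Y.IsHermitian)
    (hS : (X - Y * X⁻¹ * Y).PosSemidef) : (X - Y).PosSemidef := by
  simpa only [sub_eq_add_neg] using
    hX.add_posSemidef_of_schur hY.neg (by simpa only [neg_mul, mul_neg, neg_neg] using hS)

lemma PosDef.schur_of_add_of_sub (hY : Y.IsHermitian) (hadd : (X + Y).PosDef)
    (hsub : (X - Y).PosDef) : (X - Y * X⁻¹ * Y).PosDef := by
  have hX : X.PosDef := .of_add_of_sub hadd hsub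
  have hker : ∀ x, (1 - X⁻¹ * Y) *ᵥ x = 0 → (1 + X⁻¹ * Y) *ᵥ x = 0 → x = 0 := by
    intro x h₁ h₂
    have : (2 : 𝕜) • x = 0 := by
      rw [two_smul, ← one_mulVec x, ← add_mulVec, ← sub_add_add_cancel, add_mulVec, h₁, h₂,
        add_zero]
    exact (smul_eq_zero.mp this).resolve_left two_ne_zero
  have := (hadd.conjTranspose_mul_mul_add_conjTranspose_mul_mul hsub hker).smul
    (by norm_num : (0 : ℝ) < 2⁻¹)
  rwa [conj_add_conj_eq_two_smul_schur hX.1 hX.isUnit hY, smul_smul,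
    inv_mul_cancel₀ two_ne_zero, one_smul] at this

def schurPosDefTuples : Set (ι → Matrix n n 𝕜) :=
  {Z | (∀ i, (Z i).IsHermitian) ∧ (Z i₀).PosDef ∧
    ∀ i, i ≠ i₀ → (Z i₀ - Z i * (Z i₀)⁻¹ * Z i).PosDef}

lemma schurPosDefTuples_subset_plusMinusPosSemidefTuples :
    schurPosDefTuples (𝕜 := 𝕜) (n := n) i₀ ⊆ plusMinusPosSemidefTuples i₀ :=
  fun _ ⟨hherm, hpd, hschur⟩ => ⟨hherm, fun i hi =>
    ⟨hpd.add_posSemidef_of_schur (hherm i) (hschur i hi).posSemidef,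
      hpd.sub_posSemidef_of_schur (hherm i) (hschur i hi).posSemidef⟩⟩

lemma update_add_smul_one_mem_schurPosDefTuples [DecidableEq ι] {i₀ : ι}
    {Z : ι → Matrix n n 𝕜} (hZ : Z ∈ plusMinusPosSemidefTuples i₀) (hne : ∃ i, i ≠ i₀)
    {t : ℝ} (ht : 0 < t) :
    Function.update Z i₀ (Z i₀ + t • 1) ∈ schurPosDefTuples i₀ := by
  obtain ⟨hherm, hpm⟩ := hZ
  have hbase : Function.update Z i₀ (Z i₀ + t • 1) i₀ = Z i₀ + t • 1 :=
    Function.update_self ..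
  have hother {i} (hi : i ≠ i₀) : Function.update Z i₀ (Z i₀ + t • 1) i = Z i :=
    Function.update_of_ne hi ..
  have hshift {i} (hi : i ≠ i₀) :
      (Z i₀ + t • 1 + Z i).PosDef ∧ (Z i₀ + t • 1 - Z i).PosDef := by
    rw [add_right_comm, add_sub_right_comm]
    exact ⟨(hpm i hi).1.add_smul_one_posDef ht, (hpm i hi).2.add_smul_one_posDef ht⟩
  obtain ⟨j, hj⟩ := hne
  refine ⟨fun i => ?_, ?_, fun i hi => ?_⟩
  · by_cases hi : i = i₀
    · subst hi
      rw [hbase]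
      exact (hherm i).add (PosDef.one.smul ht).1
    · rw [hother hi]
      exact hherm i
  · rw [hbase]
    exact .of_add_of_sub (hshift hj).1 (hshift hj).2
  · rw [hbase, hother hi]
    exact .schur_of_add_of_sub (hherm i) (hshift hi).1 (hshift hi).2

lemma plusMinusPosSemidefTuples_subset_closure (hne : ∃ i, i ≠ i₀) :
    plusMinusPosSemidefTuples (𝕜 := 𝕜) (n := n) i₀ ⊆ closure (schurPosDefTuples i₀) := by
  classical
  intro Z hZ
  have hlim : Tendsto (fun t : ℝ => Function.update Z i₀ (Z i₀ + t • 1)) (𝓝[>] 0) (𝓝 Z) := by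
    have : Continuous fun t : ℝ => Function.update Z i₀ (Z i₀ + t • 1) := by fun_prop
    simpa using this.continuousWithinAt.tendsto (x := 0) (s := Set.Ioi 0)
  exact mem_closure_of_tendsto hlim <| eventually_nhdsWithin_of_forall fun t ht =>
    update_add_smul_one_mem_schurPosDefTuples hZ hne ht

theorem closure_schurPosDefTuples (hne : ∃ i, i ≠ i₀) :
    closure (schurPosDefTuples (𝕜 := 𝕜) (n := n) i₀) = plusMinusPosSemidefTuples i₀ :=
  (closure_minimal (schurPosDefTuples_subset_plusMinusPosSemidefTuples i₀)
    (isClosed_plusMinusPosSemidefTuples i₀)).antisymm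
    (plusMinusPosSemidefTuples_subset_closure i₀ hne)

end Matrix

theorem stmt_13_general (L m : ℕ) [NeZero m] (hm : 2 ≤ m) :
    {Z : Fin m → Matrix (Fin L) (Fin L) ℝ | (∀ i, (Z i).IsSymm) ∧
      ∀ i : Fin m, i ≠ 0 → (Z 0 + Z i).PosSemidef ∧ (Z 0 - Z i).PosSemidef} =
    closure {Z : Fin m → Matrix (Fin L) (Fin L) ℝ | (∀ i, (Z i).IsSymm) ∧
      (Z 0).PosDef ∧
      ∀ i : Fin m, i ≠ 0 → (Z 0 - Z i * (Z 0)⁻¹ * Z i).PosDef} := by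
  have hne : ∃ i : Fin m, i ≠ 0 := ⟨⟨1, hm⟩, by simp [Fin.ext_iff]⟩
  have := closure_schurPosDefTuples (𝕜 := ℝ) (n := Fin L) 0 hne
  simp only [schurPosDefTuples, plusMinusPosSemidefTuples, isHermitian_iff_isSymm] at this
  exact this.symm

/-- The set of tuples (X, Y₂, …, Yₘ) of symmetric matrices with X + Yᵢ ⪰ 0 and X − Yᵢ ⪰ 0
for all i equals the closure of the set of tuples with X ≻ 0 and X − Yᵢ X⁻¹ Yᵢ ≻ 0 for
all i. -/
theorem stmt_13 (L m : ℕ) (hL : 1 ≤ L) [NeZero m] (hm : 2 ≤ m) :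
    {Z : Fin m → Matrix (Fin L) (Fin L) ℝ | (∀ i, (Z i).IsSymm) ∧
      ∀ i : Fin m, i ≠ 0 → (Z 0 + Z i).PosSemidef ∧ (Z 0 - Z i).PosSemidef} =
    closure {Z : Fin m → Matrix (Fin L) (Fin L) ℝ | (∀ i, (Z i).IsSymm) ∧
      (Z 0).PosDef ∧
      ∀ i : Fin m, i ≠ 0 → (Z 0 - Z i * (Z 0)⁻¹ * Z i).PosDef} :=
  stmt_13_general L m hm
end
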